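/- Suppose every row and every column of A sums to exactly q, where q ≥ 1. Then there exists a Borel probability measure μ on S_A that is invariant under the shift T and satisfies μ({ω ∈ S_A : ω_{k+i} = ρ_i for 0 ≤ i ≤ n}) = N^{-1} q^{-n} for every admissible word ρ = ρ₀…ρ_n and every k ∈ ℤ. -/

import Mathlib

open scoped ENNReal

/-- The two-sided subshift of finite type attached to a 0-1 matrix `A`. -/
abbrev SubshiftZ {W : Type} (A : Matrix W W ℕ) : Type :=
  {ω : ℤ → W // ∀ k : ℤ, A (ω k) (ω (k + 1)) = 1}

/-- The shift `(Tω)ₖ = ω_{k+1}` on the two-sided subshift. -/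
def shiftZ {W : Type} (A : Matrix W W ℕ) (ω : SubshiftZ A) : SubshiftZ A :=
  ⟨fun k => ω.1 (k + 1), fun k => ω.2 (k + 1)⟩

open Finset
set_option linter.unusedSectionVars false

namespace S14

variable {W Γ : Type} [Fintype W] [DecidableEq W] [Fintype Γ] [DecidableEq Γ] [Nonempty Γ]

variable (s t : W → Γ → W)

def fwdF (w : W) (c : ℤ → Γ) : ℕ → W
  | 0 => w
  | n+1 => s (fwdF w c n) (c (n : ℤ))

def bwdF (w : W) (c : ℤ → Γ) : ℕ → W
  | 0 => w
  | n+1 => t (bwdF w c n) (c (-((n : ℤ)+1)))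

/-- the coded biinfinite word -/
def codeF (w : W) (c : ℤ → Γ) (m : ℤ) : W :=
  if 0 ≤ m then fwdF s w c m.toNat else bwdF t w c (-m).toNat

lemma codeF_zero (w : W) (c : ℤ → Γ) : codeF s t w c 0 = w := rfl

lemma codeF_ofNat (w : W) (c : ℤ → Γ) (n : ℕ) : codeF s t w c (n : ℤ) = fwdF s w c n := by
  simp [codeF]

lemma codeF_negNat (w : W) (c : ℤ → Γ) (n : ℕ) : codeF s t w c (-(n : ℤ)) = bwdF t w c n := by
  cases n with
  | zero => rfl
  | succ k =>
    have h : ¬ (0:ℤ) ≤ -((k:ℤ)+1) := by omega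
    have h2 : (-(-((k:ℤ)+1))).toNat = k+1 := by omega
    simp only [codeF, Nat.cast_add, Nat.cast_one, neg_add_rev]
    rw [if_neg (by omega)]
    congr 1
    omega

lemma codeF_succ (w : W) (c : ℤ → Γ) {m : ℤ} (hm : 0 ≤ m) :
    codeF s t w c (m+1) = s (codeF s t w c m) (c m) := by
  lift m to ℕ using hm
  have : ((m:ℤ)+1) = ((m+1 : ℕ) : ℤ) := by push_cast; ring
  rw [this, codeF_ofNat, codeF_ofNat]
  rfl

lemma codeF_neg (w : W) (c : ℤ → Γ) {m : ℤ} (hm : m < 0) :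
    codeF s t w c m = t (codeF s t w c (m+1)) (c m) := by
  obtain ⟨n, rfl⟩ : ∃ n : ℕ, m = -(((n+1:ℕ)):ℤ) := ⟨(-m-1).toNat, by omega⟩
  have h2 : -(((n+1:ℕ)):ℤ) + 1 = -((n:ℕ):ℤ) := by push_cast; ring
  rw [codeF_negNat, h2, codeF_negNat]
  have h3 : -(((n+1:ℕ)):ℤ) = -((n:ℤ)+1) := by push_cast; ring
  rw [h3]
  rfl

lemma fwdF_congr (w : W) (c c' : ℤ → Γ) (n : ℕ)
    (h : ∀ j : ℕ, j < n → c (j : ℤ) = c' (j : ℤ)) : fwdF s w c n = fwdF s w c' n := by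
  induction n with
  | zero => rfl
  | succ k ih =>
    simp only [fwdF]
    rw [ih (fun j hj => h j (by omega)), h k (by omega)]

lemma bwdF_congr (w : W) (c c' : ℤ → Γ) (n : ℕ)
    (h : ∀ j : ℕ, j < n → c (-((j:ℤ)+1)) = c' (-((j:ℤ)+1))) : bwdF t w c n = bwdF t w c' n := by
  induction n with
  | zero => rfl
  | succ k ih =>
    simp only [bwdF]
    rw [ih (fun j hj => h j (by omega)), h k (by omega)]

/-- locality of `codeF`: it only depends on choices in `[min m 0, max m 0)`. -/
lemma codeF_congr (w : W) (c c' : ℤ → Γ) (m : ℤ)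
    (h : ∀ j : ℤ, min m 0 ≤ j → j < max m 0 → c j = c' j) :
    codeF s t w c m = codeF s t w c' m := by
  rcases le_or_gt 0 m with hm | hm
  · lift m to ℕ using hm
    rw [codeF_ofNat, codeF_ofNat]
    exact fwdF_congr s w c c' m (fun j hj => h j (by omega) (by omega))
  · obtain ⟨n, rfl⟩ : ∃ n : ℕ, m = -((n:ℤ)) := ⟨(-m).toNat, by omega⟩
    rw [show -((n:ℤ)) = -(((n:ℕ)):ℤ) by rfl, codeF_negNat, codeF_negNat]
    exact bwdF_congr t w c c' n (fun j hj => h _ (by omega) (by omega))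


noncomputable def extF (J : Finset ℤ) (u : (i : J) → Γ) : ℤ → Γ :=
  fun m => if h : m ∈ J then u ⟨m, h⟩ else Classical.arbitrary Γ

lemma extF_mem (J : Finset ℤ) (u : (i : J) → Γ) {m : ℤ} (h : m ∈ J) :
    extF J u m = u ⟨m, h⟩ := dif_pos h

def insertEquiv (J : Finset ℤ) (j : ℤ) (hj : j ∉ J) :
    ((i : (insert j J : Finset ℤ)) → Γ) ≃ Γ × ((i : J) → Γ) where
  toFun u := (u ⟨j, Finset.mem_insert_self j J⟩, fun i => u ⟨i.1, Finset.mem_insert_of_mem i.2⟩)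
  invFun p i := if h : i.1 = j then p.1 else p.2 ⟨i.1, by
      rcases Finset.mem_insert.1 i.2 with h' | h'
      · exact absurd h' h
      · exact h'⟩
  left_inv u := by
    funext i
    rcases i with ⟨i, hi⟩
    by_cases h : i = j
    · subst h
      simp
    · simp [h]
  right_inv p := by
    rcases p with ⟨e, v⟩
    refine Prod.ext ?_ ?_
    · simp
    · funext i
      rcases i with ⟨i, hi⟩
      have h : i ≠ j := fun h => hj (h ▸ hi)
      simp [h]

lemma extF_insert (J : Finset ℤ) (j : ℤ) (hj : j ∉ J) (u : (i : (insert j J : Finset ℤ)) → Γ) :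
    extF (insert j J) u =
      Function.update (extF J (fun i => u ⟨i.1, Finset.mem_insert_of_mem i.2⟩)) j
        (u ⟨j, Finset.mem_insert_self j J⟩) := by
  funext m
  rcases eq_or_ne m j with rfl | hm
  · rw [Function.update_self, extF_mem _ _ (Finset.mem_insert_self m J)]
  · rw [Function.update_of_ne hm]
    by_cases h : m ∈ J
    · rw [extF_mem _ _ (Finset.mem_insert_of_mem h), extF_mem _ _ h]
    · have h2 : m ∉ (insert j J : Finset ℤ) := by simp [hm, h]
      simp [extF, h, h2]

lemma codeF_update (w : W) (c : ℤ → Γ) (j : ℤ) (e : Γ) (m : ℤ)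
    (hj : j < min m 0 ∨ max m 0 ≤ j) :
    codeF s t w (Function.update c j e) m = codeF s t w c m :=
  codeF_congr s t w _ _ m (fun i h1 h2 => Function.update_of_ne (by omega) _ _)

/-- number of `(seed, choices on J)` pairs whose coded word matches `ρ` on `[k, k+n]`. -/
noncomputable def cnt (k : ℤ) (n : ℕ) (ρ : Fin (n+1) → W) (J : Finset ℤ) : ℕ :=
  (Finset.univ.filter (fun y : W × ((i : J) → Γ) =>
    ∀ i : Fin (n+1), codeF s t y.1 (extF J y.2) (k + ((i : ℕ) : ℤ)) = ρ i)).card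

/-- number of pairs whose coded word has value `a` at position `m`. -/
noncomputable def cnt1 (m : ℤ) (a : W) (J : Finset ℤ) : ℕ :=
  (Finset.univ.filter (fun y : W × ((i : J) → Γ) =>
    codeF s t y.1 (extF J y.2) m = a)).card

lemma cnt_zero (k : ℤ) (ρ : Fin 1 → W) (J : Finset ℤ) :
    cnt s t k 0 ρ J = cnt1 s t k (ρ 0) J := by
  unfold cnt cnt1
  congr 1
  apply Finset.filter_congr
  intro y _
  simp [Fin.forall_fin_one]

lemma cnt_insert (k : ℤ) (n : ℕ) (ρ : Fin (n+1) → W) (J : Finset ℤ) (j : ℤ) (hj : j ∉ J) :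
    cnt s t k n ρ (insert j J) =
      ∑ y : W × ((i : J) → Γ), ∑ e : Γ,
        if (∀ i : Fin (n+1),
            codeF s t y.1 (Function.update (extF J y.2) j e) (k + ((i : ℕ) : ℤ)) = ρ i)
        then 1 else 0 := by
  classical
  rw [cnt, Finset.card_filter]
  rw [Fintype.sum_equiv (((Equiv.refl W).prodCongr (insertEquiv (Γ := Γ) J j hj)).trans
        (((Equiv.refl W).prodCongr (Equiv.prodComm Γ _)).trans (Equiv.prodAssoc W _ Γ).symm))
      _ (fun p : (W × ((i : J) → Γ)) × Γ => if (∀ i : Fin (n+1),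
          codeF s t p.1.1 (Function.update (extF J p.1.2) j p.2) (k + ((i : ℕ) : ℤ)) = ρ i)
          then (1:ℕ) else 0)
      (fun z => by
        rcases z with ⟨w, v⟩
        rw [extF_insert J j hj v]
        rfl)]
  rw [Fintype.sum_prod_type]

lemma cnt1_insert (m : ℤ) (a : W) (J : Finset ℤ) (j : ℤ) (hj : j ∉ J) :
    cnt1 s t m a (insert j J) =
      ∑ y : W × ((i : J) → Γ), ∑ e : Γ,
        if codeF s t y.1 (Function.update (extF J y.2) j e) m = a then 1 else 0 := by
  classical
  rw [cnt1, Finset.card_filter]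
  rw [Fintype.sum_equiv (((Equiv.refl W).prodCongr (insertEquiv (Γ := Γ) J j hj)).trans
        (((Equiv.refl W).prodCongr (Equiv.prodComm Γ _)).trans (Equiv.prodAssoc W _ Γ).symm))
      _ (fun p : (W × ((i : J) → Γ)) × Γ =>
          if codeF s t p.1.1 (Function.update (extF J p.1.2) j p.2) m = a then (1:ℕ) else 0)
      (fun z => by
        rcases z with ⟨w, v⟩
        rw [extF_insert J j hj v]
        rfl)]
  rw [Fintype.sum_prod_type]


lemma cnt_top (k : ℤ) (n : ℕ) (ρ : Fin (n+2) → W) (J : Finset ℤ)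
    (hj : k + (n:ℤ) ∉ J) (hk : 0 ≤ k + (n:ℤ))
    (hA : ∃! e : Γ, s (ρ ⟨n, by omega⟩) e = ρ ⟨n+1, by omega⟩) :
    cnt s t k (n+1) ρ (insert (k + (n:ℤ)) J) = cnt s t k n (fun i => ρ i.castSucc) J := by
  classical
  rw [cnt_insert _ _ _ _ _ _ _ hj, cnt, Finset.card_filter]
  refine Finset.sum_congr rfl (fun y _ => ?_)
  obtain ⟨e0, he0, hu0⟩ := hA
  by_cases hb : ∀ i : Fin (n+1), codeF s t y.1 (extF J y.2) (k + ((i : ℕ) : ℤ)) = ρ i.castSucc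
  · rw [if_pos hb]
    have hgy : codeF s t y.1 (extF J y.2) (k + (n:ℤ)) = ρ ⟨n, by omega⟩ := by
      have := hb ⟨n, by omega⟩
      simpa [Fin.castSucc] using this
    have key : ∀ e : Γ, (∀ i : Fin (n+2),
        codeF s t y.1 (Function.update (extF J y.2) (k + (n:ℤ)) e) (k + ((i : ℕ) : ℤ)) = ρ i)
        ↔ e = e0 := by
      intro e
      have hupd : ∀ i : Fin (n+1),
          codeF s t y.1 (Function.update (extF J y.2) (k + (n:ℤ)) e) (k + ((i : ℕ) : ℤ))
            = codeF s t y.1 (extF J y.2) (k + ((i : ℕ) : ℤ)) := by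
        intro i
        refine codeF_update s t _ _ _ _ _ (Or.inr ?_)
        have : (i : ℕ) ≤ n := by omega
        omega
      constructor
      · intro hall
        refine hu0 e ?_
        have htop := hall ⟨n+1, by omega⟩
        have hn : (k + ((n+1 : ℕ) : ℤ)) = (k + (n:ℤ)) + 1 := by push_cast; ring
        rw [hn, codeF_succ s t _ _ hk] at htop
        rw [Function.update_self] at htop
        have hmid : codeF s t y.1 (Function.update (extF J y.2) (k + (n:ℤ)) e) (k + (n:ℤ))
            = ρ ⟨n, by omega⟩ := by
          rw [codeF_update s t _ _ _ _ _ (Or.inr (by omega))]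
          exact hgy
        rw [hmid] at htop
        exact htop
      · rintro rfl
        intro i
        rcases lt_or_ge (i : ℕ) (n+1) with hi | hi
        · rw [codeF_update s t _ _ _ _ _ (Or.inr (by
            have : (i : ℕ) ≤ n := by omega
            omega))]
          exact hb ⟨i, hi⟩
        · have hi2 : (i : ℕ) = n + 1 := by omega
          have hn : (k + ((i : ℕ) : ℤ)) = (k + (n:ℤ)) + 1 := by rw [hi2]; push_cast; ring
          rw [hn, codeF_succ s t _ _ hk, Function.update_self,
            codeF_update s t _ _ _ _ _ (Or.inr (by omega)), hgy]
          rw [show i = (⟨n+1, by omega⟩ : Fin (n+2)) from Fin.ext hi2]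
          exact he0
    simp only [key]
    rw [Finset.sum_ite_eq' Finset.univ e0 (fun _ => (1:ℕ))]
    simp
  · rw [if_neg hb]
    refine Finset.sum_eq_zero (fun e _ => ?_)
    rw [if_neg]
    intro hall
    refine hb (fun i => ?_)
    have := hall i.castSucc
    rwa [codeF_update s t _ _ _ _ _ (Or.inr (by
      have h1 : ((i.castSucc : Fin (n+2)) : ℕ) = (i : ℕ) := rfl
      have : (i : ℕ) ≤ n := by omega
      rw [h1]; omega))] at this

lemma cnt_bot (k : ℤ) (n : ℕ) (ρ : Fin (n+2) → W) (J : Finset ℤ)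
    (hj : k ∉ J) (hk : k < 0)
    (hA : ∃! e : Γ, t (ρ 1) e = ρ 0) :
    cnt s t k (n+1) ρ (insert k J) = cnt s t (k+1) n (fun i => ρ i.succ) J := by
  classical
  rw [cnt_insert _ _ _ _ _ _ _ hj, cnt, Finset.card_filter]
  refine Finset.sum_congr rfl (fun y _ => ?_)
  obtain ⟨e0, he0, hu0⟩ := hA
  by_cases hb : ∀ i : Fin (n+1), codeF s t y.1 (extF J y.2) (k + 1 + ((i : ℕ) : ℤ)) = ρ i.succ
  · rw [if_pos hb]
    have hgy : codeF s t y.1 (extF J y.2) (k + 1) = ρ 1 := by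
      have := hb 0
      simpa using this
    have key : ∀ e : Γ, (∀ i : Fin (n+2),
        codeF s t y.1 (Function.update (extF J y.2) k e) (k + ((i : ℕ) : ℤ)) = ρ i)
        ↔ e = e0 := by
      intro e
      have hupd : ∀ m : ℤ, k < m →
          codeF s t y.1 (Function.update (extF J y.2) k e) m
            = codeF s t y.1 (extF J y.2) m := by
        intro m hm
        exact codeF_update s t _ _ _ _ _ (Or.inl (by omega))
      constructor
      · intro hall
        refine hu0 e ?_
        have hbot := hall 0
        have h0 : (k + (((0 : Fin (n+2)) : ℕ) : ℤ)) = k := by simp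
        rw [h0, codeF_neg s t _ _ hk, Function.update_self] at hbot
        rw [hupd (k+1) (by omega), hgy] at hbot
        exact hbot
      · rintro rfl
        intro i
        rcases Nat.eq_zero_or_pos (i : ℕ) with hi | hi
        · have h0 : (k + ((i : ℕ) : ℤ)) = k := by rw [hi]; simp
          rw [h0, codeF_neg s t _ _ hk, Function.update_self, hupd (k+1) (by omega), hgy]
          rw [show i = (0 : Fin (n+2)) from Fin.ext hi]
          exact he0
        · rw [hupd _ (by omega)]
          have hi2 : (i:ℕ) - 1 < n + 1 := by omega
          have := hb ⟨(i:ℕ) - 1, hi2⟩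
          have harg : k + 1 + (((⟨(i:ℕ) - 1, hi2⟩ : Fin (n+1)) : ℕ) : ℤ) = k + ((i : ℕ) : ℤ) := by
            simp only []
            omega
          rw [harg] at this
          rw [this]
          refine congrArg ρ (Fin.ext ?_)
          simp [Fin.succ]
          omega
    simp only [key]
    rw [Finset.sum_ite_eq' Finset.univ e0 (fun _ => (1:ℕ))]
    simp
  · rw [if_neg hb]
    refine Finset.sum_eq_zero (fun e _ => ?_)
    rw [if_neg]
    intro hall
    refine hb (fun i => ?_)
    have := hall i.succ
    have harg : k + (((i.succ : Fin (n+2)) : ℕ) : ℤ) = k + 1 + ((i : ℕ) : ℤ) := by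
      simp [Fin.succ]
      omega
    rw [harg, codeF_update s t _ _ _ _ _ (Or.inl (by omega))] at this
    exact this


lemma cnt1_fwd (m : ℤ) (hm : 0 ≤ m) (J : Finset ℤ) (hj : m ∉ J) (K : ℕ)
    (hIH : ∀ a : W, cnt1 s t m a J = K)
    (hs : ∀ b : W, ∑ a : W, (Finset.univ.filter (fun e : Γ => s a e = b)).card = Fintype.card Γ)
    (b : W) :
    cnt1 s t (m+1) b (insert m J) = Fintype.card Γ * K := by
  classical
  rw [cnt1_insert _ _ _ _ _ _ hj]
  have h1 : ∀ (y : W × ((i : J) → Γ)) (e : Γ),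
      codeF s t y.1 (Function.update (extF J y.2) m e) (m+1)
        = s (codeF s t y.1 (extF J y.2) m) e := by
    intro y e
    rw [codeF_succ s t _ _ hm, Function.update_self,
      codeF_update s t _ _ _ _ _ (Or.inr (by omega))]
  simp only [h1]
  have h2 : ∀ y : W × ((i : J) → Γ),
      (∑ e : Γ, if s (codeF s t y.1 (extF J y.2) m) e = b then (1:ℕ) else 0)
        = ∑ a : W, if codeF s t y.1 (extF J y.2) m = a
            then (Finset.univ.filter (fun e : Γ => s a e = b)).card else 0 := by
    intro y
    rw [Finset.sum_ite_eq Finset.univ (codeF s t y.1 (extF J y.2) m)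
      (fun a => (Finset.univ.filter (fun e : Γ => s a e = b)).card)]
    rw [if_pos (Finset.mem_univ _), Finset.card_filter]
  simp only [h2]
  rw [Finset.sum_comm]
  have h3 : ∀ a : W,
      (∑ y : W × ((i : J) → Γ), if codeF s t y.1 (extF J y.2) m = a
          then (Finset.univ.filter (fun e : Γ => s a e = b)).card else 0)
        = (Finset.univ.filter (fun e : Γ => s a e = b)).card * K := by
    intro a
    have h4 : ∀ y : W × ((i : J) → Γ),
        (if codeF s t y.1 (extF J y.2) m = a
          then (Finset.univ.filter (fun e : Γ => s a e = b)).card else 0)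
        = (Finset.univ.filter (fun e : Γ => s a e = b)).card
            * (if codeF s t y.1 (extF J y.2) m = a then 1 else 0) := by
      intro y; split <;> simp
    simp only [h4]
    rw [← Finset.mul_sum]
    congr 1
    rw [← hIH a, cnt1, Finset.card_filter]
  simp only [h3]
  rw [← Finset.sum_mul, hs b]

lemma cnt1_bwd (m : ℤ) (hm : m ≤ 0) (J : Finset ℤ) (hj : m - 1 ∉ J) (K : ℕ)
    (hIH : ∀ a : W, cnt1 s t m a J = K)
    (ht : ∀ a : W, ∑ b : W, (Finset.univ.filter (fun e : Γ => t b e = a)).card = Fintype.card Γ)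
    (a : W) :
    cnt1 s t (m-1) a (insert (m-1) J) = Fintype.card Γ * K := by
  classical
  rw [cnt1_insert _ _ _ _ _ _ hj]
  have h1 : ∀ (y : W × ((i : J) → Γ)) (e : Γ),
      codeF s t y.1 (Function.update (extF J y.2) (m-1) e) (m-1)
        = t (codeF s t y.1 (extF J y.2) m) e := by
    intro y e
    rw [codeF_neg s t _ _ (by omega : m - 1 < 0)]
    rw [Function.update_self]
    have hm1 : m - 1 + 1 = m := by ring
    rw [hm1, codeF_update s t _ _ _ _ _ (Or.inl (by omega))]
  simp only [h1]
  have h2 : ∀ y : W × ((i : J) → Γ),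
      (∑ e : Γ, if t (codeF s t y.1 (extF J y.2) m) e = a then (1:ℕ) else 0)
        = ∑ b : W, if codeF s t y.1 (extF J y.2) m = b
            then (Finset.univ.filter (fun e : Γ => t b e = a)).card else 0 := by
    intro y
    rw [Finset.sum_ite_eq Finset.univ (codeF s t y.1 (extF J y.2) m)
      (fun b => (Finset.univ.filter (fun e : Γ => t b e = a)).card)]
    rw [if_pos (Finset.mem_univ _), Finset.card_filter]
  simp only [h2]
  rw [Finset.sum_comm]
  have h3 : ∀ b : W,
      (∑ y : W × ((i : J) → Γ), if codeF s t y.1 (extF J y.2) m = b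
          then (Finset.univ.filter (fun e : Γ => t b e = a)).card else 0)
        = (Finset.univ.filter (fun e : Γ => t b e = a)).card * K := by
    intro b
    have h4 : ∀ y : W × ((i : J) → Γ),
        (if codeF s t y.1 (extF J y.2) m = b
          then (Finset.univ.filter (fun e : Γ => t b e = a)).card else 0)
        = (Finset.univ.filter (fun e : Γ => t b e = a)).card
            * (if codeF s t y.1 (extF J y.2) m = b then 1 else 0) := by
      intro y; split <;> simp
    simp only [h4]
    rw [← Finset.mul_sum]
    congr 1
    rw [← hIH b, cnt1, Finset.card_filter]
  simp only [h3]
  rw [← Finset.sum_mul, ht a]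

/-- the window needed to compute coordinate `m`. -/
noncomputable def win (m : ℤ) : Finset ℤ := Finset.Ico (min m 0) (max m 0)

lemma cnt1_empty (a : W) : cnt1 s t 0 a (∅ : Finset ℤ) = 1 := by
  classical
  unfold cnt1
  rw [Finset.card_filter, Fintype.sum_prod_type]
  have h1 : ∀ (w : W) (u : (i : ((∅ : Finset ℤ) : Finset ℤ)) → Γ),
      codeF s t (w, u).1 (extF ∅ (w, u).2) 0 = w := fun w u => codeF_zero s t w _
  simp only [h1]
  have h2 : ∀ w : W, (∑ _u : (i : ((∅ : Finset ℤ) : Finset ℤ)) → Γ,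
      if w = a then (1:ℕ) else 0) = if w = a then 1 else 0 := by
    intro w
    rw [Finset.sum_const, Finset.card_univ]
    have : Fintype.card ((i : ((∅ : Finset ℤ) : Finset ℤ)) → Γ) = 1 := by
      simp [Fintype.card_pi]
    rw [this, one_smul]
  simp only [h2]
  rw [Finset.sum_ite_eq' Finset.univ a (fun _ => (1:ℕ)), if_pos (Finset.mem_univ _)]

lemma cnt1_win
    (hs : ∀ b : W, ∑ a : W, (Finset.univ.filter (fun e : Γ => s a e = b)).card = Fintype.card Γ)
    (ht : ∀ a : W, ∑ b : W, (Finset.univ.filter (fun e : Γ => t b e = a)).card = Fintype.card Γ)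
    (m : ℤ) : ∀ a : W, cnt1 s t m a (win m) = Fintype.card Γ ^ (win m).card := by
  induction m using Int.induction_on with
  | zero =>
    intro a
    have hw : win 0 = (∅ : Finset ℤ) := by simp [win]
    rw [hw, cnt1_empty]
    simp
  | succ k ih =>
    intro a
    have hw : win ((k:ℤ)+1) = insert (k:ℤ) (win (k:ℤ)) := by
      ext x
      simp only [win, Finset.mem_Ico, Finset.mem_insert]
      omega
    have hj : (k:ℤ) ∉ win (k:ℤ) := by
      simp only [win, Finset.mem_Ico]
      omega
    rw [hw, cnt1_fwd s t (k:ℤ) (by omega) _ hj _ ih hs a,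
      Finset.card_insert_of_notMem hj, pow_succ, mul_comm]
  | pred k ih =>
    intro a
    have hw : win (-(k:ℤ)-1) = insert (-(k:ℤ)-1) (win (-(k:ℤ))) := by
      ext x
      simp only [win, Finset.mem_Ico, Finset.mem_insert]
      omega
    have hj : (-(k:ℤ)-1) ∉ win (-(k:ℤ)) := by
      simp only [win, Finset.mem_Ico]
      omega
    rw [hw, cnt1_bwd s t (-(k:ℤ)) (by omega) _ hj _ ih ht a,
      Finset.card_insert_of_notMem hj, pow_succ, mul_comm]


lemma cnt_main
    (hs : ∀ b : W, ∑ a : W, (Finset.univ.filter (fun e : Γ => s a e = b)).card = Fintype.card Γ)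
    (ht : ∀ a : W, ∑ b : W, (Finset.univ.filter (fun e : Γ => t b e = a)).card = Fintype.card Γ) :
    ∀ (n : ℕ) (k : ℤ) (ρ : Fin (n+1) → W),
      (∀ i : Fin n, ∃! e : Γ, s (ρ i.castSucc) e = ρ i.succ) →
      (∀ i : Fin n, ∃! e : Γ, t (ρ i.succ) e = ρ i.castSucc) →
      cnt s t k n ρ (Finset.Ico (min k 0) (max (k + (n:ℤ)) 0))
        = Fintype.card Γ ^ ((Finset.Ico (min k 0) (max (k + (n:ℤ)) 0)).card - n) := by
  intro n
  induction n with
  | zero =>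
    intro k ρ _ _
    rw [cnt_zero]
    have hJ : Finset.Ico (min k 0) (max (k + ((0:ℕ):ℤ)) 0) = win k := by
      simp [win]
    rw [hJ, cnt1_win s t hs ht k (ρ 0)]
    simp
  | succ n ih =>
    intro k ρ hsU htU
    rcases lt_or_ge 0 (k + (n:ℤ) + 1) with h | h
    · -- peel the top coordinate, which is `k + n`
      have hJ : Finset.Ico (min k 0) (max (k + ((n+1:ℕ):ℤ)) 0)
          = insert (k + (n:ℤ)) (Finset.Ico (min k 0) (k + (n:ℤ))) := by
        ext x
        simp only [Finset.mem_Ico, Finset.mem_insert]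
        push_cast
        omega
      have hj : k + (n:ℤ) ∉ Finset.Ico (min k 0) (k + (n:ℤ)) := by simp
      rw [hJ, cnt_top s t k n ρ _ hj (by omega) (hsU ⟨n, by omega⟩),
        Finset.card_insert_of_notMem hj]
      have hJ2 : Finset.Ico (min k 0) (k + (n:ℤ))
          = Finset.Ico (min k 0) (max (k + (n:ℤ)) 0) := by
        rw [max_eq_left (by omega)]
      have hcard : (Finset.Ico (min k 0) (k + (n:ℤ))).card + 1 - (n+1)
          = (Finset.Ico (min k 0) (max (k + (n:ℤ)) 0)).card - n := by
        rw [← hJ2]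
        omega
      rw [hcard, hJ2]
      exact ih k (fun i => ρ i.castSucc) (fun i => hsU i.castSucc) (fun i => htU i.castSucc)
    · -- peel the bottom coordinate, which is `k`
      have hk : k < 0 := by omega
      have hJ : Finset.Ico (min k 0) (max (k + ((n+1:ℕ):ℤ)) 0)
          = insert k (Finset.Ico (k+1) 0) := by
        ext x
        simp only [Finset.mem_Ico, Finset.mem_insert]
        push_cast
        omega
      have hj : k ∉ Finset.Ico (k+1) 0 := by simp
      rw [hJ, cnt_bot s t k n ρ _ hj hk (htU 0),
        Finset.card_insert_of_notMem hj]
      have hJ2 : Finset.Ico (k+1) 0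
          = Finset.Ico (min (k+1) 0) (max ((k+1) + (n:ℤ)) 0) := by
        rw [min_eq_left (by omega), max_eq_right (by omega)]
      have hcard : (Finset.Ico (k+1) 0).card + 1 - (n+1)
          = (Finset.Ico (min (k+1) 0) (max ((k+1) + (n:ℤ)) 0)).card - n := by
        rw [← hJ2]
        omega
      rw [hcard, hJ2]
      exact ih (k+1) (fun i => ρ i.succ) (fun i => hsU i.succ) (fun i => htU i.succ)


section MeasureLayer

open MeasureTheory

variable (Γ : Type) [Fintype Γ] [Nonempty Γ] [DecidableEq Γ] [AddCommGroup Γ]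
  [TopologicalSpace Γ] [DiscreteTopology Γ] [IsTopologicalAddGroup Γ]
  [MeasurableSpace Γ] [MeasurableSingletonClass Γ]

/-- Haar probability measure on the compact group `ℤ → Γ`. -/
noncomputable def haarG : Measure (ℤ → Γ) :=
  Measure.addHaarMeasure (⊤ : TopologicalSpace.PositiveCompacts (ℤ → Γ))

instance haarG_inv : (haarG Γ).IsAddLeftInvariant :=
  Measure.isAddLeftInvariant_addHaarMeasure _

instance haarG_prob : IsProbabilityMeasure (haarG Γ) :=
  ⟨by
    rw [← TopologicalSpace.PositiveCompacts.coe_top (α := ℤ → Γ)]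
    exact Measure.addHaarMeasure_self⟩

lemma cylMeasurable (J : Finset ℤ) (d : (i : J) → Γ) :
    MeasurableSet {c : ℤ → Γ | ∀ i : J, c (i : ℤ) = d i} := by
  have : {c : ℤ → Γ | ∀ i : J, c (i : ℤ) = d i}
      = ⋂ i : J, (fun c : ℤ → Γ => c (i : ℤ)) ⁻¹' {d i} := by
    ext c
    simp [Set.mem_iInter]
  rw [this]
  exact MeasurableSet.iInter (fun i => (measurable_pi_apply _) (measurableSet_singleton _))

lemma haarG_cyl (J : Finset ℤ) (d : (i : J) → Γ) :
    haarG Γ {c : ℤ → Γ | ∀ i : J, c (i : ℤ) = d i}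
      = ((Fintype.card Γ : ℝ≥0∞) ^ J.card)⁻¹ := by
  classical
  haveI : MeasurableAdd (ℤ → Γ) := by
    constructor
    · intro c
      refine measurable_pi_iff.2 (fun j => ?_)
      exact (measurable_of_finite (fun γ : Γ => c j + γ)).comp (measurable_pi_apply j)
    · intro c
      refine measurable_pi_iff.2 (fun j => ?_)
      exact (measurable_of_finite (fun γ : Γ => γ + c j)).comp (measurable_pi_apply j)
  have htrans : ∀ d' : (i : J) → Γ,
      haarG Γ {c : ℤ → Γ | ∀ i : J, c (i : ℤ) = d' i}
        = haarG Γ {c : ℤ → Γ | ∀ i : J, c (i : ℤ) = d i} := by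
    intro d'
    set g : ℤ → Γ := fun m => if h : m ∈ J then d ⟨m, h⟩ - d' ⟨m, h⟩ else 0 with hg
    have hpre : (fun c : ℤ → Γ => g + c) ⁻¹' {c : ℤ → Γ | ∀ i : J, c (i : ℤ) = d i}
        = {c : ℤ → Γ | ∀ i : J, c (i : ℤ) = d' i} := by
      ext c
      simp only [Set.mem_preimage, Set.mem_setOf_eq, Pi.add_apply]
      constructor
      · intro h i
        have h2 := h i
        rw [hg] at h2
        simp only [dif_pos i.2] at h2
        have h3 := eq_sub_of_add_eq' h2
        rwa [sub_sub_cancel] at h3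
      · intro h i
        have h2 := h i
        rw [hg]
        simp only [dif_pos i.2]
        rw [h2, sub_add_cancel]
    rw [← hpre, measure_preimage_add]
  have hpart : (Set.univ : Set (ℤ → Γ))
      = ⋃ d' : (i : J) → Γ, {c : ℤ → Γ | ∀ i : J, c (i : ℤ) = d' i} := by
    ext c
    simp only [Set.mem_univ, true_iff, Set.mem_iUnion, Set.mem_setOf_eq]
    exact ⟨fun i => c i, fun i => rfl⟩
  have hdisj : Pairwise (Function.onFun Disjoint
      (fun d' : (i : J) → Γ => {c : ℤ → Γ | ∀ i : J, c (i : ℤ) = d' i})) := by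
    intro d1 d2 hne
    refine Set.disjoint_left.2 (fun c h1 h2 => hne ?_)
    funext i
    rw [← h1 i, ← h2 i]
  have h1 : (1 : ℝ≥0∞) = ∑' d' : (i : J) → Γ,
      haarG Γ {c : ℤ → Γ | ∀ i : J, c (i : ℤ) = d' i} := by
    rw [← measure_iUnion hdisj (fun d' => cylMeasurable Γ J d'), ← hpart, measure_univ]
  rw [tsum_fintype] at h1
  simp only [htrans] at h1
  rw [Finset.sum_const, Finset.card_univ, nsmul_eq_mul] at h1
  have hcard : (Fintype.card ((i : J) → Γ) : ℝ≥0∞)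
      = (Fintype.card Γ : ℝ≥0∞) ^ J.card := by
    rw [Fintype.card_fun, Fintype.card_coe]
    push_cast
    ring
  have hc0 : (Fintype.card ((i : J) → Γ) : ℝ≥0∞) ≠ 0 := by
    simp [Fintype.card_ne_zero]
  have hctop : (Fintype.card ((i : J) → Γ) : ℝ≥0∞) ≠ ⊤ := by simp
  have := congrArg (fun x => (Fintype.card ((i : J) → Γ) : ℝ≥0∞)⁻¹ * x) h1
  simp only [mul_one, ← mul_assoc, ENNReal.inv_mul_cancel hc0 hctop, one_mul] at this
  rw [← this, ← hcard]

end MeasureLayer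

section UnifW

open MeasureTheory

variable (W : Type) [Fintype W] [Nonempty W] [MeasurableSpace W] [MeasurableSingletonClass W]

/-- uniform probability measure on the finite set `W`. -/
noncomputable def unifW : Measure W :=
  ((Fintype.card W : ℝ≥0∞))⁻¹ • Measure.count

lemma unifW_singleton (a : W) : unifW W {a} = ((Fintype.card W : ℝ≥0∞))⁻¹ := by
  rw [unifW, Measure.smul_apply, Measure.count_singleton, smul_eq_mul, mul_one]

instance unifW_prob : IsProbabilityMeasure (unifW W) :=
  ⟨by
    rw [unifW, Measure.smul_apply, Measure.count_univ, smul_eq_mul]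
    simp only [ENat.card_eq_coe_fintype_card, ENat.toENNReal_coe]
    exact ENNReal.inv_mul_cancel (by simp [Fintype.card_ne_zero]) (by simp)⟩

end UnifW


section Master

open MeasureTheory

variable {W : Type} [Fintype W] [Nonempty W] [DecidableEq W]
  [MeasurableSpace W] [MeasurableSingletonClass W]
variable (Γ : Type) [Fintype Γ] [Nonempty Γ] [DecidableEq Γ] [AddCommGroup Γ]
  [TopologicalSpace Γ] [DiscreteTopology Γ] [IsTopologicalAddGroup Γ]
  [MeasurableSpace Γ] [MeasurableSingletonClass Γ]

lemma master (J : Finset ℤ) (p : W × ((i : J) → Γ) → Prop) [DecidablePred p] :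
    ((unifW W).prod (haarG Γ)) {x : W × (ℤ → Γ) | p (x.1, fun i => x.2 (i : ℤ))}
      = ((Finset.univ.filter p).card : ℝ≥0∞)
          * ((Fintype.card W : ℝ≥0∞) * (Fintype.card Γ : ℝ≥0∞) ^ J.card)⁻¹ := by
  classical
  have hset : {x : W × (ℤ → Γ) | p (x.1, fun i => x.2 (i : ℤ))}
      = ⋃ y : {y : W × ((i : J) → Γ) // p y},
          (({y.1.1} : Set W) ×ˢ {c : ℤ → Γ | ∀ i : J, c (i : ℤ) = y.1.2 i}) := by
    ext x
    simp only [Set.mem_setOf_eq, Set.mem_iUnion, Set.mem_prod, Set.mem_singleton_iff]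
    constructor
    · intro hx
      exact ⟨⟨(x.1, fun i => x.2 (i : ℤ)), hx⟩, rfl, fun i => rfl⟩
    · rintro ⟨y, h1, h2⟩
      have hxy : (x.1, fun i : J => x.2 (i : ℤ)) = y.1 := by
        refine Prod.ext h1 ?_
        funext i
        exact h2 i
      rw [hxy]
      exact y.2
  have hdisj : Pairwise (Function.onFun Disjoint
      (fun y : {y : W × ((i : J) → Γ) // p y} =>
        (({y.1.1} : Set W) ×ˢ {c : ℤ → Γ | ∀ i : J, c (i : ℤ) = y.1.2 i}))) := by
    intro y1 y2 hne
    refine Set.disjoint_left.2 (fun x hx1 hx2 => hne ?_)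
    simp only [Set.mem_prod, Set.mem_singleton_iff, Set.mem_setOf_eq] at hx1 hx2
    refine Subtype.ext (Prod.ext ?_ ?_)
    · rw [← hx1.1, ← hx2.1]
    · funext i
      rw [← hx1.2 i, ← hx2.2 i]
  rw [hset, measure_iUnion hdisj
    (fun y => (measurableSet_singleton _).prod (cylMeasurable Γ J _))]
  rw [tsum_fintype]
  have hterm : ∀ y : {y : W × ((i : J) → Γ) // p y},
      ((unifW W).prod (haarG Γ))
          (({y.1.1} : Set W) ×ˢ {c : ℤ → Γ | ∀ i : J, c (i : ℤ) = y.1.2 i})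
        = ((Fintype.card W : ℝ≥0∞) * (Fintype.card Γ : ℝ≥0∞) ^ J.card)⁻¹ := by
    intro y
    haveI : SFinite (haarG Γ) := instSFiniteOfSigmaFinite
    rw [Measure.prod_prod, unifW_singleton, haarG_cyl]
    exact (ENNReal.mul_inv (Or.inl (by simp [Fintype.card_ne_zero])) (Or.inl (by simp))).symm
  simp only [hterm]
  rw [Finset.sum_const, Finset.card_univ, nsmul_eq_mul, Fintype.card_subtype]

end Master


section Subshift

open MeasureTheory

variable {W : Type} [Fintype W] [Nonempty W] [DecidableEq W]
  [MeasurableSpace W] [MeasurableSingletonClass W] (A : Matrix W W ℕ)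

lemma coord_meas (k : ℤ) : Measurable (fun ω : SubshiftZ A => ω.1 k) :=
  (measurable_pi_apply k).comp measurable_subtype_coe

lemma coordSet_meas (k : ℤ) (a : W) : MeasurableSet {ω : SubshiftZ A | ω.1 k = a} := by
  have : {ω : SubshiftZ A | ω.1 k = a} = (fun ω : SubshiftZ A => ω.1 k) ⁻¹' {a} := rfl
  rw [this]
  exact coord_meas A k (measurableSet_singleton a)

lemma cylSet_meas (k : ℤ) (n : ℕ) (ρ : Fin (n+1) → W) :
    MeasurableSet {ω : SubshiftZ A | ∀ i : Fin (n+1), ω.1 (k + ((i : ℕ) : ℤ)) = ρ i} := by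
  have : {ω : SubshiftZ A | ∀ i : Fin (n+1), ω.1 (k + ((i : ℕ) : ℤ)) = ρ i}
      = ⋂ i : Fin (n+1), {ω : SubshiftZ A | ω.1 (k + ((i : ℕ) : ℤ)) = ρ i} := by
    ext ω
    simp [Set.mem_iInter]
  rw [this]
  exact MeasurableSet.iInter (fun i => coordSet_meas A _ _)

/-- the π-system of symmetric cylinder sets. -/
def cylPi : Set (Set (SubshiftZ A)) :=
  {C | ∃ (m : ℕ) (ρ : ℤ → W),
    C = {ω : SubshiftZ A | ∀ i : ℤ, -(m:ℤ) ≤ i → i ≤ (m:ℤ) → ω.1 i = ρ i}}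

lemma cylPi_isPiSystem : IsPiSystem (cylPi A) := by
  rintro C1 ⟨m1, ρ1, rfl⟩ C2 ⟨m2, ρ2, rfl⟩ hne
  obtain ⟨ω0, hω1, hω2⟩ := hne
  refine ⟨max m1 m2, ω0.1, ?_⟩
  ext ω
  simp only [Set.mem_inter_iff, Set.mem_setOf_eq]
  constructor
  · rintro ⟨h1, h2⟩ i hi1 hi2
    rw [Nat.cast_max] at hi1 hi2
    by_cases hc : -(m1:ℤ) ≤ i ∧ i ≤ (m1:ℤ)
    · rw [h1 i hc.1 hc.2, ← hω1 i hc.1 hc.2]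
    · have hc2 : -(m2:ℤ) ≤ i ∧ i ≤ (m2:ℤ) := by
        rcases le_total (m1:ℤ) (m2:ℤ) with h | h <;> omega
      rw [h2 i hc2.1 hc2.2, ← hω2 i hc2.1 hc2.2]
  · intro h
    have hmax1 : ∀ i : ℤ, -(m1:ℤ) ≤ i → i ≤ (m1:ℤ) → ω.1 i = ω0.1 i := by
      intro i hi1 hi2
      refine h i ?_ ?_ <;> rw [Nat.cast_max] <;> omega
    have hmax2 : ∀ i : ℤ, -(m2:ℤ) ≤ i → i ≤ (m2:ℤ) → ω.1 i = ω0.1 i := by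
      intro i hi1 hi2
      refine h i ?_ ?_ <;> rw [Nat.cast_max] <;> omega
    exact ⟨fun i hi1 hi2 => (hmax1 i hi1 hi2).trans (hω1 i hi1 hi2),
      fun i hi1 hi2 => (hmax2 i hi1 hi2).trans (hω2 i hi1 hi2)⟩

lemma cylPiSet_meas (m : ℕ) (ρ : ℤ → W) :
    MeasurableSet {ω : SubshiftZ A | ∀ i : ℤ, -(m:ℤ) ≤ i → i ≤ (m:ℤ) → ω.1 i = ρ i} := by
  have : {ω : SubshiftZ A | ∀ i : ℤ, -(m:ℤ) ≤ i → i ≤ (m:ℤ) → ω.1 i = ρ i}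
      = ⋂ (i : ℤ) (_ : -(m:ℤ) ≤ i) (_ : i ≤ (m:ℤ)), {ω : SubshiftZ A | ω.1 i = ρ i} := by
    ext ω
    simp [Set.mem_iInter]
  rw [this]
  exact MeasurableSet.iInter fun i => MeasurableSet.iInter fun _ =>
    MeasurableSet.iInter fun _ => coordSet_meas A i (ρ i)

lemma cylPi_gen :
    (inferInstance : MeasurableSpace (SubshiftZ A))
      = MeasurableSpace.generateFrom (cylPi A) := by
  classical
  refine le_antisymm ?_ (MeasurableSpace.generateFrom_le ?_)
  · have hcoordS : ∀ (k : ℤ) (a : W),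
        MeasurableSet[MeasurableSpace.generateFrom (cylPi A)] {ω : SubshiftZ A | ω.1 k = a} := by
      intro k a
      have hk1 : k ∈ Finset.Icc (-(k.natAbs:ℤ)) (k.natAbs:ℤ) := by
        simp only [Finset.mem_Icc]
        omega
      have hset : {ω : SubshiftZ A | ω.1 k = a}
          = ⋃ (v : (i : (Finset.Icc (-(k.natAbs:ℤ)) (k.natAbs:ℤ) : Finset ℤ)) → W)
              (_ : v ⟨k, hk1⟩ = a),
              {ω : SubshiftZ A | ∀ i : ℤ, -(k.natAbs:ℤ) ≤ i → i ≤ (k.natAbs:ℤ) →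
                ω.1 i = (fun j : ℤ =>
                  if h : j ∈ Finset.Icc (-(k.natAbs:ℤ)) (k.natAbs:ℤ) then v ⟨j, h⟩
                  else Classical.arbitrary W) i} := by
        ext ω
        simp only [Set.mem_setOf_eq, Set.mem_iUnion]
        constructor
        · intro hω
          refine ⟨fun i => ω.1 (i : ℤ), by simpa using hω, ?_⟩
          intro i hi1 hi2
          have hi : i ∈ Finset.Icc (-(k.natAbs:ℤ)) (k.natAbs:ℤ) := by
            simp only [Finset.mem_Icc]
            omega
          simp only [dif_pos hi]
        · rintro ⟨v, hv, hω⟩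
          have := hω k (by omega) (by omega)
          rw [dif_pos hk1] at this
          rw [this, hv]
      rw [hset]
      refine MeasurableSet.iUnion fun v => MeasurableSet.iUnion fun _ => ?_
      exact MeasurableSpace.measurableSet_generateFrom ⟨k.natAbs, _, rfl⟩
    change MeasurableSpace.comap (Subtype.val) MeasurableSpace.pi ≤ _
    have hpi : (MeasurableSpace.pi : MeasurableSpace (ℤ → W))
        = ⨆ k : ℤ, (inferInstance : MeasurableSpace W).comap (fun c : ℤ → W => c k) := rfl
    rw [hpi, MeasurableSpace.comap_iSup]
    refine iSup_le (fun k => ?_)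
    rw [MeasurableSpace.comap_comp]
    rintro s ⟨u, -, rfl⟩
    have : ((fun c : ℤ → W => c k) ∘ Subtype.val) ⁻¹' u
        = ⋃ a ∈ u, {ω : SubshiftZ A | ω.1 k = a} := by
      ext ω
      simp [Function.comp]
    rw [this]
    exact MeasurableSet.biUnion u.to_countable (fun a _ => hcoordS k a)
  · rintro C ⟨m, ρ, rfl⟩
    exact cylPiSet_meas A m ρ

lemma shiftZ_meas : Measurable (shiftZ A) := by
  refine Measurable.subtype_mk (measurable_pi_iff.2 (fun k => ?_))
  exact coord_meas A (k + 1)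

end Subshift


end S14

open MeasureTheory in
/-- If every row and every column of `A` sums to `q ≥ 1`, there is a shift
invariant Borel probability measure on `S_A` giving every cylinder of an
admissible word of length `n+1`, placed at any position `k ∈ ℤ`, the measure
`N⁻¹ q⁻ⁿ`. -/
theorem statement14 {W : Type} [Fintype W] [Nonempty W] [DecidableEq W]
    [MeasurableSpace W] [MeasurableSingletonClass W]
    (A : Matrix W W ℕ) (hA01 : ∀ a b, A a b = 0 ∨ A a b = 1)
    (q : ℕ) (hq : 1 ≤ q)
    (hrow : ∀ a, ∑ b, A a b = q) (hcol : ∀ b, ∑ a, A a b = q) :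
    ∃ μ : MeasureTheory.Measure (SubshiftZ A),
      MeasureTheory.IsProbabilityMeasure μ ∧
      MeasureTheory.MeasurePreserving (shiftZ A) μ μ ∧
      ∀ (n : ℕ) (ρ : Fin (n + 1) → W),
        (∀ i : Fin n, A (ρ i.castSucc) (ρ i.succ) = 1) →
        ∀ k : ℤ,
          μ {ω : SubshiftZ A | ∀ i : Fin (n + 1), ω.1 (k + (i : ℕ)) = ρ i} =
            ((Fintype.card W : ℝ≥0∞) * (q : ℝ≥0∞) ^ n)⁻¹ := by
  classical
  haveI : NeZero q := ⟨by omega⟩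
  letI : TopologicalSpace (ZMod q) := ⊥
  haveI : DiscreteTopology (ZMod q) := ⟨rfl⟩
  letI : MeasurableSpace (ZMod q) := ⊤
  haveI : MeasurableSingletonClass (ZMod q) := ⟨fun _ => trivial⟩
  haveI : IsTopologicalAddGroup (ZMod q) :=
    { continuous_add := continuous_of_discreteTopology
      continuous_neg := continuous_of_discreteTopology }
  have hQ : Fintype.card (ZMod q) = q := ZMod.card q
  -- cardinalities of rows and columns
  have hrowcard : ∀ a, (Finset.univ.filter (fun b => A a b = 1)).card = q := by
    intro a
    rw [Finset.card_filter, ← hrow a]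
    refine (Finset.sum_congr rfl (fun b _ => ?_)).symm
    rcases hA01 a b with h | h <;> simp [h]
  have hcolcard : ∀ b, (Finset.univ.filter (fun a => A a b = 1)).card = q := by
    intro b
    rw [Finset.card_filter, ← hcol b]
    refine (Finset.sum_congr rfl (fun a _ => ?_)).symm
    rcases hA01 a b with h | h <;> simp [h]
  -- the coding maps
  have hsubcard : ∀ a, Fintype.card (ZMod q) = Fintype.card {b // A a b = 1} := by
    intro a
    rw [Fintype.card_subtype, hrowcard a, hQ]
  have htubcard : ∀ b, Fintype.card (ZMod q) = Fintype.card {a // A a b = 1} := by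
    intro b
    rw [Fintype.card_subtype, hcolcard b, hQ]
  let sE : ∀ a : W, ZMod q ≃ {b // A a b = 1} := fun a => Fintype.equivOfCardEq (hsubcard a)
  let tE : ∀ b : W, ZMod q ≃ {a // A a b = 1} := fun b => Fintype.equivOfCardEq (htubcard b)
  let s : W → ZMod q → W := fun a e => (sE a e).1
  let t : W → ZMod q → W := fun b e => (tE b e).1
  have hs2 : ∀ a e, A a (s a e) = 1 := fun a e => (sE a e).2
  have ht2 : ∀ b e, A (t b e) b = 1 := fun b e => (tE b e).2
  have hs1 : ∀ a b, A a b = 1 → ∃! e, s a e = b := by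
    intro a b h
    refine ⟨(sE a).symm ⟨b, h⟩, ?_, ?_⟩
    · show ((sE a) ((sE a).symm ⟨b, h⟩)).1 = b
      rw [Equiv.apply_symm_apply]
    · intro e he
      have h2 : sE a e = ⟨b, h⟩ := Subtype.ext he
      rw [← h2, Equiv.symm_apply_apply]
  have ht1 : ∀ a b, A a b = 1 → ∃! e, t b e = a := by
    intro a b h
    refine ⟨(tE b).symm ⟨a, h⟩, ?_, ?_⟩
    · show ((tE b) ((tE b).symm ⟨a, h⟩)).1 = a
      rw [Equiv.apply_symm_apply]
    · intro e he
      have h2 : tE b e = ⟨a, h⟩ := Subtype.ext he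
      rw [← h2, Equiv.symm_apply_apply]
  -- fiberwise counts
  have hsum_s : ∀ b : W, ∑ a : W, (Finset.univ.filter (fun e : ZMod q => s a e = b)).card
      = Fintype.card (ZMod q) := by
    intro b
    have h1 : ∀ a : W, (Finset.univ.filter (fun e : ZMod q => s a e = b)).card
        = if A a b = 1 then 1 else 0 := by
      intro a
      by_cases h : A a b = 1
      · rw [if_pos h, Finset.card_eq_one]
        obtain ⟨e0, he0, hu⟩ := hs1 a b h
        refine ⟨e0, ?_⟩
        ext e
        simp only [Finset.mem_filter, Finset.mem_univ, true_and, Finset.mem_singleton]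
        exact ⟨fun he => hu e he, fun he => he ▸ he0⟩
      · rw [if_neg h, Finset.card_eq_zero, Finset.filter_eq_empty_iff]
        intro e _ he
        exact h (he ▸ hs2 a e)
    simp only [h1]
    rw [← Finset.card_filter, hcolcard b, hQ]
  have hsum_t : ∀ a : W, ∑ b : W, (Finset.univ.filter (fun e : ZMod q => t b e = a)).card
      = Fintype.card (ZMod q) := by
    intro a
    have h1 : ∀ b : W, (Finset.univ.filter (fun e : ZMod q => t b e = a)).card
        = if A a b = 1 then 1 else 0 := by
      intro b
      by_cases h : A a b = 1
      · rw [if_pos h, Finset.card_eq_one]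
        obtain ⟨e0, he0, hu⟩ := ht1 a b h
        refine ⟨e0, ?_⟩
        ext e
        simp only [Finset.mem_filter, Finset.mem_univ, true_and, Finset.mem_singleton]
        exact ⟨fun he => hu e he, fun he => he ▸ he0⟩
      · rw [if_neg h, Finset.card_eq_zero, Finset.filter_eq_empty_iff]
        intro e _ he
        exact h (he ▸ ht2 b e)
    simp only [h1]
    rw [← Finset.card_filter, hrowcard a, hQ]
  -- the coding map into the subshift
  have hadm : ∀ (x : W × (ℤ → ZMod q)) (m : ℤ),
      A (S14.codeF s t x.1 x.2 m) (S14.codeF s t x.1 x.2 (m+1)) = 1 := by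
    intro x m
    rcases le_or_gt 0 m with hm | hm
    · rw [S14.codeF_succ s t _ _ hm]
      exact hs2 _ _
    · rw [S14.codeF_neg s t _ _ hm]
      exact ht2 _ _
  set Φ : W × (ℤ → ZMod q) → SubshiftZ A :=
    fun x => ⟨fun m => S14.codeF s t x.1 x.2 m, fun m => hadm x m⟩ with hΦdef
  have hfwd : ∀ n : ℕ, Measurable (fun x : W × (ℤ → ZMod q) => S14.fwdF s x.1 x.2 n) := by
    intro n
    induction n with
    | zero => exact measurable_fst
    | succ n ih =>
      have heq : (fun x : W × (ℤ → ZMod q) => S14.fwdF s x.1 x.2 (n+1))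
          = (fun p : W × ZMod q => s p.1 p.2)
            ∘ (fun x : W × (ℤ → ZMod q) => (S14.fwdF s x.1 x.2 n, x.2 ((n:ℕ):ℤ))) := rfl
      rw [heq]
      refine (measurable_of_finite _).comp (ih.prodMk ?_)
      exact (measurable_pi_apply _).comp measurable_snd
  have hbwd : ∀ n : ℕ, Measurable (fun x : W × (ℤ → ZMod q) => S14.bwdF t x.1 x.2 n) := by
    intro n
    induction n with
    | zero => exact measurable_fst
    | succ n ih =>
      have heq : (fun x : W × (ℤ → ZMod q) => S14.bwdF t x.1 x.2 (n+1))
          = (fun p : W × ZMod q => t p.1 p.2)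
            ∘ (fun x : W × (ℤ → ZMod q) => (S14.bwdF t x.1 x.2 n, x.2 (-((n:ℤ)+1)))) := rfl
      rw [heq]
      refine (measurable_of_finite _).comp (ih.prodMk ?_)
      exact (measurable_pi_apply _).comp measurable_snd
  have hΦ : Measurable Φ := by
    refine Measurable.subtype_mk (measurable_pi_iff.2 (fun m => ?_))
    rcases le_or_gt 0 m with hm | hm
    · have heq : (fun x : W × (ℤ → ZMod q) => S14.codeF s t x.1 x.2 m)
          = fun x => S14.fwdF s x.1 x.2 m.toNat := by
        funext x
        simp [S14.codeF, hm]
      rw [heq]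
      exact hfwd _
    · have heq : (fun x : W × (ℤ → ZMod q) => S14.codeF s t x.1 x.2 m)
          = fun x => S14.bwdF t x.1 x.2 (-m).toNat := by
        funext x
        simp [S14.codeF, not_le.2 hm]
      rw [heq]
      exact hbwd _
  set μ0 : Measure (W × (ℤ → ZMod q)) := (S14.unifW W).prod (S14.haarG (ZMod q)) with hμ0
  set μ : Measure (SubshiftZ A) := μ0.map Φ with hμ
  haveI hμ0prob : IsProbabilityMeasure μ0 := by
    rw [hμ0]
    infer_instance
  haveI hμprob : IsProbabilityMeasure μ := by
    rw [hμ]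
    exact Measure.isProbabilityMeasure_map hΦ.aemeasurable
  have hNQ0 : (Fintype.card W : ℝ≥0∞) ≠ 0 := by
    simp [Fintype.card_ne_zero]
  have hq0' : (q : ℝ≥0∞) ≠ 0 := by
    exact_mod_cast (by omega : q ≠ 0)
  -- the central cylinder formula
  have hcyl : ∀ (n : ℕ) (ρ : Fin (n + 1) → W),
      (∀ i : Fin n, A (ρ i.castSucc) (ρ i.succ) = 1) →
      ∀ k : ℤ, μ {ω : SubshiftZ A | ∀ i : Fin (n + 1), ω.1 (k + (i : ℕ)) = ρ i}
        = ((Fintype.card W : ℝ≥0∞) * (q : ℝ≥0∞) ^ n)⁻¹ := by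
    intro n ρ hadm' k
    rw [hμ, Measure.map_apply hΦ (S14.cylSet_meas A k n ρ)]
    set J := Finset.Ico (min k 0) (max (k + (n:ℤ)) 0) with hJ
    have hpre : Φ ⁻¹' {ω : SubshiftZ A | ∀ i : Fin (n+1), ω.1 (k + ((i:ℕ):ℤ)) = ρ i}
        = {x : W × (ℤ → ZMod q) |
            (fun y : W × ((i : J) → ZMod q) => ∀ i : Fin (n+1),
              S14.codeF s t y.1 (S14.extF J y.2) (k + ((i:ℕ):ℤ)) = ρ i)
            (x.1, fun i => x.2 (i : ℤ))} := by
      ext x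
      simp only [Set.mem_preimage, Set.mem_setOf_eq, hΦdef]
      have hcongr : ∀ i : Fin (n+1),
          S14.codeF s t x.1 (S14.extF J (fun i : J => x.2 (i:ℤ))) (k + ((i:ℕ):ℤ))
            = S14.codeF s t x.1 x.2 (k + ((i:ℕ):ℤ)) := by
        intro i
        refine S14.codeF_congr s t _ _ _ _ (fun j hj1 hj2 => ?_)
        have hin : (i:ℕ) ≤ n := by omega
        have hjJ : j ∈ J := by
          rw [hJ]
          simp only [Finset.mem_Ico]
          omega
        rw [S14.extF_mem J _ hjJ]
      constructor
      · intro h i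
        rw [hcongr i]
        exact h i
      · intro h i
        rw [← hcongr i]
        exact h i
    rw [hpre, hμ0, S14.master (ZMod q) J (fun y : W × ((i : J) → ZMod q) =>
      ∀ i : Fin (n+1), S14.codeF s t y.1 (S14.extF J y.2) (k + ((i:ℕ):ℤ)) = ρ i)]
    have hcnt := S14.cnt_main s t hsum_s hsum_t n k ρ
      (fun i => hs1 _ _ (hadm' i)) (fun i => ht1 _ _ (hadm' i))
    rw [← hJ] at hcnt
    rw [show (Finset.univ.filter (fun y : W × ((i : J) → ZMod q) => ∀ i : Fin (n+1),
        S14.codeF s t y.1 (S14.extF J y.2) (k + ((i:ℕ):ℤ)) = ρ i)).card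
      = S14.cnt s t k n ρ J from rfl]
    rw [hcnt, hQ]
    have hcard : n ≤ J.card := by
      rw [hJ, Int.card_Ico]
      omega
    have hsplit : ((q:ℝ≥0∞)) ^ J.card = (q:ℝ≥0∞) ^ n * (q:ℝ≥0∞) ^ (J.card - n) := by
      rw [← pow_add]
      congr 1
      omega
    push_cast
    rw [hsplit, ← mul_assoc,
      ENNReal.mul_inv (Or.inl (mul_ne_zero hNQ0 (pow_ne_zero n hq0')))
        (Or.inr (pow_ne_zero _ hq0')),
      mul_comm (((Fintype.card W : ℝ≥0∞) * (q:ℝ≥0∞)^n)⁻¹) (((q:ℝ≥0∞) ^ (J.card - n))⁻¹),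
      ← mul_assoc,
      ENNReal.mul_inv_cancel (pow_ne_zero _ hq0')
        (ENNReal.pow_ne_top (ENNReal.natCast_ne_top q)),
      one_mul]
  refine ⟨μ, hμprob, ⟨S14.shiftZ_meas A, ?_⟩, hcyl⟩
  -- measure preservation via the π-system of symmetric cylinders
  haveI : IsProbabilityMeasure (μ.map (shiftZ A)) :=
    Measure.isProbabilityMeasure_map (S14.shiftZ_meas A).aemeasurable
  refine ext_of_generate_finite (S14.cylPi A) (S14.cylPi_gen A) (S14.cylPi_isPiSystem A) ?_ ?_
  · rintro C ⟨m, ρ, rfl⟩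
    rw [Measure.map_apply (S14.shiftZ_meas A) (S14.cylPiSet_meas A m ρ)]
    by_cases hadmρ : ∀ i : ℤ, -(m:ℤ) ≤ i → i < (m:ℤ) → A (ρ i) (ρ (i+1)) = 1
    · -- admissible window: both sides are interval cylinders of length 2m+1
      set w : Fin (2*m+1) → W := fun j => ρ (-(m:ℤ) + ((j:ℕ):ℤ)) with hw
      have hwadm : ∀ i : Fin (2*m), A (w i.castSucc) (w i.succ) = 1 := by
        intro i
        have hlt : (i:ℕ) < 2*m := i.isLt
        show A (ρ (-(m:ℤ) + (((i:ℕ):ℕ):ℤ))) (ρ (-(m:ℤ) + (((i:ℕ)+1:ℕ):ℤ))) = 1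
        have harg : -(m:ℤ) + (((i:ℕ)+1:ℕ):ℤ) = (-(m:ℤ) + ((i:ℕ):ℤ)) + 1 := by
          push_cast
          ring
        rw [harg]
        exact hadmρ _ (by omega) (by omega)
      have hC1 : {ω : SubshiftZ A | ∀ i : ℤ, -(m:ℤ) ≤ i → i ≤ (m:ℤ) → ω.1 i = ρ i}
          = {ω : SubshiftZ A | ∀ j : Fin (2*m+1), ω.1 (-(m:ℤ) + ((j:ℕ):ℤ)) = w j} := by
        ext ω
        simp only [Set.mem_setOf_eq]
        constructor
        · intro h j
          have hlt : (j:ℕ) < 2*m+1 := j.isLt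
          exact h _ (by omega) (by omega)
        · intro h i hi1 hi2
          have hj : (i + (m:ℤ)).toNat < 2*m+1 := by omega
          have h2 := h ⟨(i + (m:ℤ)).toNat, hj⟩
          have harg : -(m:ℤ) + (((i + (m:ℤ)).toNat : ℕ) : ℤ) = i := by omega
          rw [hw] at h2
          simp only at h2
          rw [harg] at h2
          exact h2
      have hC2 : shiftZ A ⁻¹'
            {ω : SubshiftZ A | ∀ i : ℤ, -(m:ℤ) ≤ i → i ≤ (m:ℤ) → ω.1 i = ρ i}
          = {ω : SubshiftZ A | ∀ j : Fin (2*m+1), ω.1 ((-(m:ℤ)+1) + ((j:ℕ):ℤ)) = w j} := by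
        ext ω
        simp only [Set.mem_preimage, Set.mem_setOf_eq]
        have hsh : ∀ i : ℤ, (shiftZ A ω).1 i = ω.1 (i + 1) := fun i => rfl
        constructor
        · intro h j
          have hlt : (j:ℕ) < 2*m+1 := j.isLt
          have h2 := h (-(m:ℤ) + ((j:ℕ):ℤ)) (by omega) (by omega)
          rw [hsh] at h2
          have harg : -(m:ℤ) + ((j:ℕ):ℤ) + 1 = (-(m:ℤ)+1) + ((j:ℕ):ℤ) := by ring
          rw [harg] at h2
          exact h2
        · intro h i hi1 hi2
          rw [hsh]
          have hj : (i + (m:ℤ)).toNat < 2*m+1 := by omega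
          have h2 := h ⟨(i + (m:ℤ)).toNat, hj⟩
          have harg : (-(m:ℤ)+1) + (((i + (m:ℤ)).toNat : ℕ) : ℤ) = i + 1 := by omega
          rw [hw] at h2
          simp only at h2
          rw [harg] at h2
          have harg2 : -(m:ℤ) + (((i + (m:ℤ)).toNat : ℕ) : ℤ) = i := by omega
          rw [harg2] at h2
          exact h2
      rw [hC2, hC1, hcyl (2*m) w hwadm ((-(m:ℤ)+1)), hcyl (2*m) w hwadm (-(m:ℤ))]
    · -- non-admissible window: both sides are empty
      push_neg at hadmρ
      obtain ⟨i0, hi1, hi2, hA0⟩ := hadmρ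
      have hC0 : {ω : SubshiftZ A | ∀ i : ℤ, -(m:ℤ) ≤ i → i ≤ (m:ℤ) → ω.1 i = ρ i}
          = (∅ : Set (SubshiftZ A)) := by
        ext ω
        simp only [Set.mem_setOf_eq, Set.mem_empty_iff_false, iff_false]
        intro h
        refine hA0 ?_
        rw [← h i0 (by omega) (by omega), ← h (i0+1) (by omega) (by omega)]
        exact ω.2 i0
      have hC0' : shiftZ A ⁻¹'
            {ω : SubshiftZ A | ∀ i : ℤ, -(m:ℤ) ≤ i → i ≤ (m:ℤ) → ω.1 i = ρ i}
          = (∅ : Set (SubshiftZ A)) := by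
        ext ω
        simp only [Set.mem_preimage, Set.mem_setOf_eq, Set.mem_empty_iff_false, iff_false]
        intro h
        refine hA0 ?_
        have e1 := h i0 (by omega) (by omega)
        have e2 := h (i0+1) (by omega) (by omega)
        rw [show (shiftZ A ω).1 i0 = ω.1 (i0+1) from rfl] at e1
        rw [show (shiftZ A ω).1 (i0+1) = ω.1 (i0+1+1) from rfl] at e2
        rw [← e1, ← e2]
        exact ω.2 (i0+1)
      rw [hC0', hC0]
  · rw [Measure.map_apply (S14.shiftZ_meas A) MeasurableSet.univ, Set.preimage_univ]
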